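/- Let $N_p \subseteq \mathbb{C}^{d_p}$ and $N_q \subseteq \mathbb{C}^{d_q}$ be subspaces of dimensions $e_p$ and $e_q$ with Plücker coordinates $(\Delta_{I'})$, $(\Delta_{J'})$, and let $A$ be a $d_q \times d_p$ matrix with entries $m_{j,i}$. Then $A(N_p) \subseteq N_q$ if and only if all quiver Plücker relations $\sum_{i \notin I, j \in J} (-1)^{\epsilon(i,I)+\epsilon(j,J)} m_{j,i} \Delta_{I\cup\{i\}} \Delta_{J\setminus\{j\}} = 0$ hold, for all $(e_p-1)$-subsets $I \subseteq \{1,\dots,d_p\}$ and $(e_q+1)$-subsets $J \subseteq \{1,\dots,d_q\}$. -/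

import Mathlib

open Matrix Finset

def eps {d : ℕ} (i : Fin d) (I : Finset (Fin d)) : ℕ := (I.filter fun i' => i' ≤ i).card

noncomputable def plucker {d e : ℕ} (B : Matrix (Fin d) (Fin e) ℂ) (I : Finset (Fin d)) : ℂ :=
  if h : I.card = e then (B.submatrix (fun k => (I.orderIsoOfFin h k : Fin d)) id).det else 0

/-- The columns of `B` form a basis of the subspace `N` of `ℂ^d`. -/
def IsColBasis {d e : ℕ} (B : Matrix (Fin d) (Fin e) ℂ) (N : Submodule ℂ (Fin d → ℂ)) : Prop :=
  LinearIndependent ℂ (fun l => fun i => B i l) ∧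
    Submodule.span ℂ (Set.range fun l => fun i => B i l) = N

noncomputable def qpr {dp dq ep eq : ℕ} (A : Matrix (Fin dq) (Fin dp) ℂ)
    (Bp : Matrix (Fin dp) (Fin ep) ℂ) (Bq : Matrix (Fin dq) (Fin eq) ℂ)
    (I : Finset (Fin dp)) (J : Finset (Fin dq)) : ℂ :=
  ∑ i ∈ Iᶜ, ∑ j ∈ J,
    (-1 : ℂ) ^ (eps i I + eps j J) * A j i * plucker Bp (insert i I) * plucker Bq (J.erase j)

/-! The vector `w_I = ((-1)^ε(i,I) Δ_{I ∪ {i}})_i` (`pluckerVec B_p I`) is a Laplace expansion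
along an inserted row, hence a combination of the columns of `B_p`, so it lies in `N_p`.
If `Δ_{I₀} ≠ 0`, the `e_p` vectors `w_{I₀ \ {a}}`, `a ∈ I₀`, are linearly independent (at the
coordinates `a ∈ I₀` they form a diagonal pattern), so the `w_I` span `N_p`. Expanding along an
appended last column, the quiver Plücker relation for `(I, J)` is, up to sign, the `J`-th maximal
minor of `[B_q | A w_I]`, and all these minors vanish iff `A w_I ∈ N_q`. -/

theorem Finset.sum_orderEmbOfFin {α M : Type*} [LinearOrder α] [AddCommMonoid M] (s : Finset α)
    {n : ℕ} (h : s.card = n) (f : α → M) :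
    ∑ x ∈ s, f x = ∑ k, f (s.orderEmbOfFin h k) := by
  conv_lhs => rw [← s.map_orderEmbOfFin_univ h]
  rw [sum_map]
  rfl

theorem Finset.orderEmbOfFin_succAbove {α : Type*} [LinearOrder α] {s t : Finset α} {n : ℕ}
    (hs : s.card = n + 1) (ht : t.card = n) (k : Fin (n + 1))
    (hst : s.erase (s.orderEmbOfFin hs k) = t) (m : Fin n) :
    t.orderEmbOfFin ht m = s.orderEmbOfFin hs (k.succAbove m) := by
  subst hst
  refine (congrFun (orderEmbOfFin_unique ht (fun m => ?_)
    ((s.orderEmbOfFin hs).strictMono.comp (Fin.strictMono_succAbove k))) m).symm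
  exact mem_erase.2 ⟨(s.orderEmbOfFin hs).injective.ne (Fin.succAbove_ne k m),
    orderEmbOfFin_mem s hs _⟩

theorem Matrix.det_of_cons_removeNth {R : Type*} [CommRing R] {n : ℕ}
    (M : Matrix (Fin (n + 1)) (Fin (n + 1)) R) (k : Fin (n + 1)) :
    det (of (vecCons (M k) (k.removeNth M))) = (-1) ^ (k : ℕ) * det M := by
  have hM : of (vecCons (M k) (k.removeNth M)) = M.submatrix k.cycleRange.symm id := by
    ext i j
    refine Fin.cases ?_ (fun m => ?_) i <;> simp [Fin.removeNth]
  rw [hM, det_permute, Equiv.Perm.sign_symm, Fin.sign_cycleRange]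
  push_cast
  rfl

lemma linearIndependent_of_apply_ne_zero {ι α K : Type*} [Field K] (v : ι → α → K) (p : ι → α)
    (hdiag : ∀ i, v i (p i) ≠ 0) (hoff : Pairwise fun i j => v j (p i) = 0) :
    LinearIndependent K v := by
  refine LinearIndependent.of_pairwise_dual_eq_zero_one v
    (fun i => (v i (p i))⁻¹ • LinearMap.proj (p i)) (fun i j hij => ?_) (fun i => ?_)
  · simp [hoff hij]
  · simp [hdiag i]

lemma eps_orderEmbOfFin {d n : ℕ} (s : Finset (Fin d)) (h : s.card = n) (k : Fin n) :
    eps (s.orderEmbOfFin h k) s = k + 1 := by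
  have hfilter :
      s.filter (· ≤ s.orderEmbOfFin h k) = (Iic k).map (s.orderEmbOfFin h).toEmbedding := by
    ext x
    simp only [mem_filter, mem_map, mem_Iic, RelEmbedding.coe_toEmbedding]
    constructor
    · rintro ⟨hx, hle⟩
      obtain ⟨m, rfl⟩ : x ∈ Set.range (s.orderEmbOfFin h) := by rwa [range_orderEmbOfFin]
      exact ⟨m, (s.orderEmbOfFin h).le_iff_le.1 hle, rfl⟩
    · rintro ⟨m, hm, rfl⟩
      exact ⟨orderEmbOfFin_mem s h m, (s.orderEmbOfFin h).le_iff_le.2 hm⟩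
  rw [eps, hfilter, card_map, Fin.card_Iic]

lemma eps_insert_self {d : ℕ} {i : Fin d} {I : Finset (Fin d)} (hi : i ∉ I) :
    eps i (insert i I) = eps i I + 1 := by
  rw [eps, eps, filter_insert, if_pos le_rfl, card_insert_of_notMem (by simp [hi])]

lemma plucker_eq_det {d e : ℕ} (B : Matrix (Fin d) (Fin e) ℂ) {I : Finset (Fin d)}
    (h : I.card = e) : plucker B I = (B.submatrix (I.orderEmbOfFin h) id).det := by
  rw [plucker, dif_pos h]
  rfl

lemma plucker_of_card_ne {d e : ℕ} (B : Matrix (Fin d) (Fin e) ℂ) {I : Finset (Fin d)}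
    (h : I.card ≠ e) : plucker B I = 0 :=
  dif_neg h

lemma plucker_insert {d n : ℕ} (C : Matrix (Fin d) (Fin (n + 1)) ℂ) {i : Fin d}
    {I : Finset (Fin d)} (hi : i ∉ I) (hI : I.card = n) :
    plucker C (insert i I) =
      (-1) ^ eps i I * det (of (vecCons (C i) (C.submatrix (I.orderEmbOfFin hI) id))) := by
  have hs : (insert i I).card = n + 1 := by rw [card_insert_of_notMem hi, hI]
  obtain ⟨k, hk⟩ : i ∈ Set.range ((insert i I).orderEmbOfFin hs) := by
    simp [range_orderEmbOfFin]
  have hpos : (k : ℕ) = eps i I := by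
    have := eps_orderEmbOfFin (insert i I) hs k
    rw [hk, eps_insert_self hi] at this
    omega
  set M := C.submatrix ((insert i I).orderEmbOfFin hs) id
  have hM :
      vecCons (C i) (C.submatrix (I.orderEmbOfFin hI) id) = vecCons (M k) (k.removeNth M) := by
    congr 1
    · rw [← hk]
      rfl
    · ext m l
      simp [M, Fin.removeNth, orderEmbOfFin_succAbove hs hI k (by rw [hk, erase_insert hi])]
  rw [hM, det_of_cons_removeNth, ← hpos, ← mul_assoc, ← mul_pow, neg_one_mul, neg_neg, one_pow,
    one_mul, plucker_eq_det _ hs]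

lemma IsColBasis.range_mulVecLin {d e : ℕ} {B : Matrix (Fin d) (Fin e) ℂ}
    {N : Submodule ℂ (Fin d → ℂ)} (hB : IsColBasis B N) : LinearMap.range B.mulVecLin = N := by
  rw [Matrix.range_mulVecLin, ← hB.2]
  rfl

noncomputable def pluckerVec {d e : ℕ} (B : Matrix (Fin d) (Fin e) ℂ) (I : Finset (Fin d)) :
    Fin d → ℂ :=
  fun i => (-1) ^ eps i I * plucker B (insert i I)

lemma pluckerVec_of_mem {d e : ℕ} (B : Matrix (Fin d) (Fin e) ℂ) {I : Finset (Fin d)}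
    (hI : I.card + 1 = e) {i : Fin d} (hi : i ∈ I) : pluckerVec B I i = 0 := by
  rw [pluckerVec, insert_eq_of_mem hi, plucker_of_card_ne _ (by omega), mul_zero]

lemma pluckerVec_apply_eq_det {d n : ℕ} (C : Matrix (Fin d) (Fin (n + 1)) ℂ)
    {I : Finset (Fin d)} (hI : I.card = n) (i : Fin d) :
    pluckerVec C I i = det (of (vecCons (C i) (C.submatrix (I.orderEmbOfFin hI) id))) := by
  by_cases hi : i ∈ I
  · obtain ⟨m, rfl⟩ : i ∈ Set.range (I.orderEmbOfFin hI) := by rwa [range_orderEmbOfFin]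
    rw [pluckerVec_of_mem C (by omega) hi, eq_comm]
    exact det_zero_of_row_eq (Fin.succ_ne_zero m).symm rfl
  · rw [pluckerVec, plucker_insert C hi hI, ← mul_assoc, ← mul_pow, neg_one_mul, neg_neg, one_pow,
      one_mul]

lemma pluckerVec_eq_mulVec {d n : ℕ} (C : Matrix (Fin d) (Fin (n + 1)) ℂ)
    {I : Finset (Fin d)} (hI : I.card = n) :
    pluckerVec C I =
      C *ᵥ fun l => (-1) ^ (l : ℕ) * det (C.submatrix (I.orderEmbOfFin hI) l.succAbove) := by
  ext i
  rw [pluckerVec_apply_eq_det C hI, det_succ_row_zero, mulVec, dotProduct]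
  refine sum_congr rfl fun l _ => ?_
  have hminor : (of (vecCons (C i) (C.submatrix (I.orderEmbOfFin hI) id))).submatrix Fin.succ
      l.succAbove = C.submatrix (I.orderEmbOfFin hI) l.succAbove := rfl
  rw [hminor]
  change _ * C i l * _ = _
  ring

lemma pluckerVec_mem {d e : ℕ} {B : Matrix (Fin d) (Fin e) ℂ} {N : Submodule ℂ (Fin d → ℂ)}
    (hB : IsColBasis B N) {I : Finset (Fin d)} (hI : I.card + 1 = e) : pluckerVec B I ∈ N := by
  obtain rfl := hI
  rw [pluckerVec_eq_mulVec B rfl, ← hB.range_mulVecLin]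
  exact LinearMap.mem_range_self _ _

def snocCol {α : Type*} {d e : ℕ} (B : Matrix (Fin d) (Fin e) α) (u : Fin d → α) :
    Matrix (Fin d) (Fin (e + 1)) α :=
  of fun i => Fin.snoc (B i) (u i)

lemma col_snocCol {α : Type*} {d e : ℕ} (B : Matrix (Fin d) (Fin e) α) (u : Fin d → α) :
    (snocCol B u).col = Fin.snoc B.col u := by
  ext k i
  refine Fin.lastCases ?_ (fun l => ?_) k <;> simp [snocCol]

lemma plucker_snocCol {d e : ℕ} (B : Matrix (Fin d) (Fin e) ℂ) (u : Fin d → ℂ)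
    {J : Finset (Fin d)} (hJ : J.card = e + 1) :
    plucker (snocCol B u) J =
      (-1) ^ (e + 1) * ∑ j ∈ J, (-1) ^ eps j J * u j * plucker B (J.erase j) := by
  rw [plucker_eq_det _ hJ, det_succ_column _ (Fin.last e), sum_orderEmbOfFin J hJ, mul_sum]
  refine sum_congr rfl fun k _ => ?_
  have hk : (J.erase (J.orderEmbOfFin hJ k)).card = e := by
    rw [card_erase_of_mem (orderEmbOfFin_mem J hJ k), hJ, Nat.add_sub_cancel]
  have hminor : ((snocCol B u).submatrix (J.orderEmbOfFin hJ) id).submatrix k.succAbove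
      (Fin.last e).succAbove =
        B.submatrix ((J.erase (J.orderEmbOfFin hJ k)).orderEmbOfFin hk) id := by
    ext m l
    simp [snocCol, orderEmbOfFin_succAbove hJ hk k rfl]
  rw [hminor, eps_orderEmbOfFin, ← plucker_eq_det B hk]
  simp only [snocCol, submatrix_apply, of_apply, id, Fin.snoc_last, Fin.val_last]
  have hsign : (-1 : ℂ) ^ ((k : ℕ) + e) = (-1) ^ (e + 1) * (-1) ^ ((k : ℕ) + 1) := by
    rw [← pow_add, show e + 1 + (k + 1) = k + e + 2 by ring, pow_add _ _ 2]
    norm_num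
  rw [hsign]
  ring

lemma linearIndependent_col_iff_exists_plucker_ne_zero {d e : ℕ}
    (C : Matrix (Fin d) (Fin e) ℂ) : LinearIndependent ℂ C.col ↔ ∃ J, plucker C J ≠ 0 := by
  classical
  constructor
  · intro hC
    have hrows : Submodule.span ℂ (Set.range C.row) = ⊤ := by
      refine Submodule.eq_top_of_finrank_eq ?_
      rw [← rank_eq_finrank_span_row, rank_eq_finrank_span_cols, finrank_span_eq_card hC,
        Module.finrank_fin_fun, Fintype.card_fin]
    obtain ⟨b, -, -, hspan, hb⟩ :=
      exists_linearIndepOn_extension (linearIndepOn_empty ℂ C.row) (Set.empty_subset Set.univ)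
    have hbspan : Submodule.span ℂ (Set.range fun x : b => C.row x) = ⊤ := by
      rw [eq_top_iff, ← hrows, Submodule.span_le, ← Set.image_univ, ← Set.image_eq_range]
      exact hspan
    have hcard : b.toFinset.card = e := by
      rw [Set.toFinset_card, ← finrank_span_eq_card hb, hbspan, finrank_top,
        Module.finrank_fin_fun]
    refine ⟨b.toFinset, ?_⟩
    rw [plucker_eq_det C hcard, ← isUnit_iff_ne_zero, ← isUnit_iff_isUnit_det,
      ← linearIndependent_rows_iff_isUnit]
    exact hb.comp (fun k => ⟨_, Set.mem_toFinset.1 (orderEmbOfFin_mem _ hcard k)⟩)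
      fun k k' h => (b.toFinset.orderEmbOfFin hcard).injective (by simpa using h)
  · rintro ⟨J, hJ⟩
    have hcard : J.card = e := by
      by_contra h
      exact hJ (plucker_of_card_ne C h)
    rw [plucker_eq_det C hcard, ← isUnit_iff_ne_zero, ← isUnit_iff_isUnit_det,
      ← linearIndependent_cols_iff_isUnit] at hJ
    exact LinearIndependent.of_comp (LinearMap.funLeft ℂ ℂ (J.orderEmbOfFin hcard)) hJ

lemma mem_iff_forall_plucker_snocCol_eq_zero {d e : ℕ} {B : Matrix (Fin d) (Fin e) ℂ}
    {N : Submodule ℂ (Fin d → ℂ)} (hB : IsColBasis B N) (u : Fin d → ℂ) :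
    u ∈ N ↔ ∀ J : Finset (Fin d), J.card = e + 1 → plucker (snocCol B u) J = 0 := by
  have hdep : u ∈ N ↔ ¬ LinearIndependent ℂ (snocCol B u).col := by
    rw [col_snocCol, linearIndependent_finSnoc, ← hB.2]
    exact ⟨fun hu h => h.2 hu, fun h => not_not.1 fun hu => h ⟨hB.1, hu⟩⟩
  rw [hdep, linearIndependent_col_iff_exists_plucker_ne_zero]
  simp only [not_exists, not_not]
  exact ⟨fun h J _ => h J, fun h J => (eq_or_ne J.card (e + 1)).elim (h J)
    (plucker_of_card_ne _)⟩

lemma qpr_eq_plucker_snocCol {dp dq ep eq : ℕ} (A : Matrix (Fin dq) (Fin dp) ℂ)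
    (Bp : Matrix (Fin dp) (Fin ep) ℂ) (Bq : Matrix (Fin dq) (Fin eq) ℂ) {I : Finset (Fin dp)}
    (hI : I.card + 1 = ep) {J : Finset (Fin dq)} (hJ : J.card = eq + 1) :
    qpr A Bp Bq I J = (-1) ^ (eq + 1) * plucker (snocCol Bq (A *ᵥ pluckerVec Bp I)) J := by
  rw [plucker_snocCol _ _ hJ, ← mul_assoc, ← mul_pow, neg_one_mul, neg_neg, one_pow, one_mul,
    qpr, sum_comm]
  refine sum_congr rfl fun j _ => ?_
  have hmulVec : (A *ᵥ pluckerVec Bp I) j = ∑ i ∈ Iᶜ, A j i * pluckerVec Bp I i := by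
    refine (sum_subset (subset_univ Iᶜ) fun i _ hi => ?_).symm
    rw [pluckerVec_of_mem Bp hI (by simpa using hi), mul_zero]
  rw [hmulVec, mul_sum, sum_mul]
  refine sum_congr rfl fun i _ => ?_
  rw [pluckerVec, pow_add]
  ring

lemma linearIndependent_pluckerVec_erase {d e : ℕ} (B : Matrix (Fin d) (Fin e) ℂ)
    {I₀ : Finset (Fin d)} (hI₀ : I₀.card = e) (h₀ : plucker B I₀ ≠ 0) :
    LinearIndependent ℂ fun a : I₀ => pluckerVec B (I₀.erase a) := by
  refine linearIndependent_of_apply_ne_zero _ Subtype.val (fun a => ?_) (fun a b hab => ?_)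
  · rw [pluckerVec, insert_erase a.2]
    exact mul_ne_zero (pow_ne_zero _ (by norm_num)) h₀
  · exact pluckerVec_of_mem B ((card_erase_add_one b.2).trans hI₀)
      (mem_erase.2 ⟨Subtype.val_injective.ne hab, a.2⟩)

lemma span_pluckerVec {d e : ℕ} {B : Matrix (Fin d) (Fin e) ℂ} {N : Submodule ℂ (Fin d → ℂ)}
    (hB : IsColBasis B N) :
    Submodule.span ℂ (pluckerVec B '' {I | I.card + 1 = e}) = N := by
  have hle : Submodule.span ℂ (pluckerVec B '' {I | I.card + 1 = e}) ≤ N := by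
    rw [Submodule.span_le]
    rintro _ ⟨I, hI, rfl⟩
    exact pluckerVec_mem hB hI
  obtain ⟨I₀, h₀⟩ := (linearIndependent_col_iff_exists_plucker_ne_zero B).1 hB.1
  have hI₀ : I₀.card = e := by
    by_contra h
    exact h₀ (plucker_of_card_ne B h)
  have hW := linearIndependent_pluckerVec_erase B hI₀ h₀
  refine Submodule.eq_of_le_of_finrank_le hle ?_
  calc Module.finrank ℂ N = e := by rw [← hB.2, finrank_span_eq_card hB.1, Fintype.card_fin]
    _ = Module.finrank ℂ
          (Submodule.span ℂ (Set.range fun a : I₀ => pluckerVec B (I₀.erase a))) := by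
      rw [finrank_span_eq_card hW, Fintype.card_coe, hI₀]
    _ ≤ _ := by
      refine Submodule.finrank_mono (Submodule.span_mono ?_)
      rintro _ ⟨a, rfl⟩
      exact ⟨_, (card_erase_add_one a.2).trans hI₀, rfl⟩

theorem stmt3 {dp dq ep eq : ℕ}
    (Np : Submodule ℂ (Fin dp → ℂ)) (Nq : Submodule ℂ (Fin dq → ℂ))
    (Bp : Matrix (Fin dp) (Fin ep) ℂ) (Bq : Matrix (Fin dq) (Fin eq) ℂ)
    (hBp : IsColBasis Bp Np) (hBq : IsColBasis Bq Nq)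
    (A : Matrix (Fin dq) (Fin dp) ℂ) :
    (∀ x ∈ Np, A.mulVec x ∈ Nq) ↔
      (∀ I : Finset (Fin dp), I.card + 1 = ep →
        ∀ J : Finset (Fin dq), J.card = eq + 1 → qpr A Bp Bq I J = 0) := by
  have hrel : ∀ I : Finset (Fin dp), I.card + 1 = ep → (A *ᵥ pluckerVec Bp I ∈ Nq ↔
      ∀ J : Finset (Fin dq), J.card = eq + 1 → qpr A Bp Bq I J = 0) := by
    intro I hI
    rw [mem_iff_forall_plucker_snocCol_eq_zero hBq]
    refine forall₂_congr fun J hJ => ?_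
    rw [qpr_eq_plucker_snocCol A Bp Bq hI hJ, mul_eq_zero,
      or_iff_right (pow_ne_zero _ (by norm_num))]
  constructor
  · intro hA I hI
    exact (hrel I hI).1 (hA _ (pluckerVec_mem hBp hI))
  · intro h x hx
    rw [← span_pluckerVec hBp] at hx
    refine (Submodule.span_le (p := Nq.comap A.mulVecLin)).2 ?_ hx
    rintro _ ⟨I, hI, rfl⟩
    exact (hrel I hI).2 (h I hI)
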